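/- Assume f satisfies (f0)–(f4). Then F(t) > 0 for every real t ≠ 0. (Claim 1 in the proof of Lemma 2.3.) -/

import Mathlib

open Filter Set MeasureTheory Asymptotics Topology

/-!
Since `f = o(|t|^(p_* - 1))` at `0`, both `F` and `F̃` are `o(|t|^p_*)` there, so
`F̃ t / |t|^p_*` tends to `0` at `0` and (f4) forces `F̃ > 0` away from `0`. As
`(F / t²)' = F̃ / t³`, the function `F / t²` is then strictly decreasing on `(-∞, 0)` and
strictly increasing on `(0, ∞)`; it tends to `0` at `0` because `p_* > 2`, hence it is
positive.
-/

lemma pos_of_tendsto_nhdsNE_of_strictAntiOn_of_strictMonoOn {g : ℝ → ℝ}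
    (hlim : Tendsto g (𝓝[≠] 0) (𝓝 0)) (hanti : StrictAntiOn g (Iio 0))
    (hmono : StrictMonoOn g (Ioi 0)) {t : ℝ} (ht : t ≠ 0) : 0 < g t := by
  rcases ht.lt_or_gt with ht | ht
  · have hhalf : 0 ≤ g (t / 2) :=
      le_of_tendsto (hlim.mono_left (nhdsLT_le_nhdsNE 0)) <| by
        filter_upwards [Ioo_mem_nhdsLT (show t / 2 < 0 by linarith)] with u hu
        exact (hanti (show t / 2 < 0 by linarith) hu.2 hu.1).le
    exact hhalf.trans_lt (hanti ht (show t / 2 < 0 by linarith) (by linarith))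
  · have hhalf : 0 ≤ g (t / 2) :=
      le_of_tendsto (hlim.mono_left (nhdsGT_le_nhdsNE 0)) <| by
        filter_upwards [Ioo_mem_nhdsGT (show 0 < t / 2 by linarith)] with u hu
        exact (hmono hu.1 (show 0 < t / 2 by linarith) hu.2).le
    exact hhalf.trans_lt (hmono (show 0 < t / 2 by linarith) ht (by linarith))

theorem Asymptotics.IsLittleO.intervalIntegral_rpow {E : Type*} [NormedAddCommGroup E]
    [NormedSpace ℝ E] {f : ℝ → E} {q : ℝ} (hq : 1 ≤ q)
    (hf : f =o[𝓝[≠] 0] fun t => |t| ^ (q - 1)) :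
    (fun t => ∫ s in (0 : ℝ)..t, f s) =o[𝓝 0] fun t => |t| ^ q := by
  refine isLittleO_iff.2 fun c hc => ?_
  obtain ⟨δ, hδ, hbound⟩ :=
    Metric.eventually_nhds_iff.1 (eventually_nhdsWithin_iff.1 (isLittleO_iff.1 hf hc))
  filter_upwards [Metric.ball_mem_nhds 0 hδ] with t ht
  have hst : ∀ᵐ s, s ∈ uIoc 0 t → ‖f s‖ ≤ c * |t| ^ (q - 1) := by
    filter_upwards [volume.ae_ne 0] with s hs0 hs
    have hst : |s| ≤ |t| := by
      simpa using abs_sub_left_of_mem_uIcc (uIoc_subset_uIcc hs)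
    calc ‖f s‖ ≤ c * ‖|s| ^ (q - 1)‖ :=
          hbound (lt_of_le_of_lt (by simpa using hst) ht) hs0
      _ ≤ c * |t| ^ (q - 1) := by
          rw [Real.norm_of_nonneg (by positivity)]
          gcongr
  calc ‖∫ s in (0 : ℝ)..t, f s‖ ≤ c * |t| ^ (q - 1) * |t - 0| :=
        intervalIntegral.norm_integral_le_of_norm_le_const_ae hst
    _ = c * ‖|t| ^ q‖ := by
        rw [sub_zero, Real.norm_of_nonneg (by positivity), mul_assoc,
          ← Real.rpow_add_one' (abs_nonneg t) (by linarith), sub_add_cancel]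

lemma isLittleO_abs_rpow_sq {q : ℝ} (hq : 2 < q) :
    (fun t : ℝ => |t| ^ q) =o[𝓝 0] fun t => t ^ 2 := by
  have hsmall : (fun t : ℝ => |t| ^ (q - 2)) =o[𝓝 0] fun _ => (1 : ℝ) := by
    refine (isLittleO_one_iff ℝ).2 ?_
    have hcont : Continuous fun t : ℝ => |t| ^ (q - 2) :=
      continuous_abs.rpow_const fun _ => Or.inr (by linarith)
    simpa [Real.zero_rpow (show q - 2 ≠ 0 by linarith)] using hcont.tendsto 0
  refine (hsmall.mul_isBigO (isBigO_refl (fun t : ℝ => t ^ 2) _)).congr (fun t => ?_)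
    (fun t => one_mul _)
  rw [← sq_abs, ← Real.rpow_natCast, ← Real.rpow_add' (abs_nonneg t) (by norm_num; linarith)]
  norm_num

lemma hasDerivAt_div_sq {F : ℝ → ℝ} {f t : ℝ} (hF : HasDerivAt F f t) (ht : t ≠ 0) :
    HasDerivAt (fun u => F u / u ^ 2) ((f * t - 2 * F t) / t ^ 3) t := by
  refine (hF.div (hasDerivAt_pow 2 t) (pow_ne_zero 2 ht)).congr_deriv ?_
  field_simp
  ring

lemma strictMonoOn_div_sq_Ioi {F f : ℝ → ℝ}
    (hF : ∀ t ∈ Ioi (0 : ℝ), HasDerivAt F (f t) t)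
    (hpos : ∀ t ∈ Ioi (0 : ℝ), 0 < f t * t - 2 * F t) :
    StrictMonoOn (fun u => F u / u ^ 2) (Ioi 0) := by
  have hderiv (t : ℝ) (ht : 0 < t) := hasDerivAt_div_sq (hF t ht) ht.ne'
  refine strictMonoOn_of_hasDerivWithinAt_pos
    (f' := fun t => (f t * t - 2 * F t) / t ^ 3) (convex_Ioi 0)
    (fun t ht => (hderiv t ht).continuousAt.continuousWithinAt)
    (fun t ht => ?_) (fun t ht => ?_)
  · rw [interior_Ioi] at ht ⊢
    exact (hderiv t ht).hasDerivWithinAt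
  · rw [interior_Ioi] at ht
    exact div_pos (hpos t ht) (pow_pos ht 3)

lemma strictAntiOn_div_sq_Iio {F f : ℝ → ℝ}
    (hF : ∀ t ∈ Iio (0 : ℝ), HasDerivAt F (f t) t)
    (hpos : ∀ t ∈ Iio (0 : ℝ), 0 < f t * t - 2 * F t) :
    StrictAntiOn (fun u => F u / u ^ 2) (Iio 0) := by
  have hderiv (t : ℝ) (ht : t < 0) := hasDerivAt_div_sq (hF t ht) ht.ne
  refine strictAntiOn_of_hasDerivWithinAt_neg
    (f' := fun t => (f t * t - 2 * F t) / t ^ 3) (convex_Iio 0)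
    (fun t ht => (hderiv t ht).continuousAt.continuousWithinAt)
    (fun t ht => ?_) (fun t ht => ?_)
  · rw [interior_Iio] at ht ⊢
    exact (hderiv t ht).hasDerivWithinAt
  · rw [interior_Iio] at ht
    exact div_neg_of_pos_of_neg (hpos t ht) (Odd.pow_neg (by decide) ht)

theorem stmt_1_general (N : ℕ) (hN : 3 ≤ N) (p : ℝ) (hp2 : 2 ≤ p)
    (f F Ft : ℝ → ℝ) (hf0 : Continuous f)
    (hF : ∀ t : ℝ, F t = ∫ s in (0:ℝ)..t, f s)
    (hFt : ∀ t : ℝ, Ft t = f t * t - 2 * F t)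
    (hf1 : Tendsto (fun t : ℝ => f t / |t| ^ (p + 2 * p / (N : ℝ) - 1)) (nhdsWithin 0 {0}ᶜ) (nhds 0))
    (hf4a : StrictAntiOn (fun t : ℝ => Ft t / |t| ^ (p + 2 * p / (N : ℝ))) (Iio 0))
    (hf4b : StrictMonoOn (fun t : ℝ => Ft t / |t| ^ (p + 2 * p / (N : ℝ))) (Ioi 0)) :
    ∀ t : ℝ, t ≠ 0 → 0 < F t := by
  set q := p + 2 * p / (N : ℝ)
  have hq : 2 < q := by
    have : 0 < 2 * p / (N : ℝ) := by
      have : (0 : ℝ) < N := by exact_mod_cast (by omega : 0 < N)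
      positivity
    linarith
  have hf : f =o[𝓝[≠] 0] fun t => |t| ^ (q - 1) := by
    refine (isLittleO_iff_tendsto' ?_).2 hf1
    filter_upwards [self_mem_nhdsWithin] with t ht hzero
    exact absurd hzero (by positivity [abs_pos.2 ht])
  have hFo : F =o[𝓝[≠] 0] fun t => |t| ^ q :=
    ((hf.intervalIntegral_rpow (by linarith)).mono nhdsWithin_le_nhds).congr_left
      fun t => (hF t).symm
  have hFto : Ft =o[𝓝[≠] 0] fun t => |t| ^ q := by
    have hft : (fun t => f t * t) =o[𝓝[≠] 0] fun t => |t| ^ q :=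
      (hf.mul_isBigO (isBigO_abs_right.2 (isBigO_refl _ _))).congr_right fun t => by
        rw [← Real.rpow_add_one' (abs_nonneg t) (by linarith), sub_add_cancel]
    exact (hft.sub (hFo.const_mul_left 2)).congr_left fun t => (hFt t).symm
  have hFt_pos (t : ℝ) (ht : t ≠ 0) : 0 < f t * t - 2 * F t := by
    rw [← hFt, ← div_pos_iff_of_pos_right (by positivity [abs_pos.2 ht] : 0 < |t| ^ q)]
    exact pos_of_tendsto_nhdsNE_of_strictAntiOn_of_strictMonoOn
      hFto.tendsto_div_nhds_zero hf4a hf4b ht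
  have hderiv (t : ℝ) : HasDerivAt F (f t) t := by
    rw [funext hF]
    exact intervalIntegral.integral_hasDerivAt_right (hf0.intervalIntegrable 0 t)
      hf0.aestronglyMeasurable.stronglyMeasurableAtFilter hf0.continuousAt
  have hlim : Tendsto (fun t => F t / t ^ 2) (𝓝[≠] 0) (𝓝 0) :=
    (hFo.trans ((isLittleO_abs_rpow_sq hq).mono nhdsWithin_le_nhds)).tendsto_div_nhds_zero
  intro t ht
  rw [← div_pos_iff_of_pos_right (by positivity : 0 < t ^ 2)]
  exact pos_of_tendsto_nhdsNE_of_strictAntiOn_of_strictMonoOn hlim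
    (strictAntiOn_div_sq_Iio (fun t _ => hderiv t) fun t ht => hFt_pos t ht.ne)
    (strictMonoOn_div_sq_Ioi (fun t _ => hderiv t) fun t ht => hFt_pos t ht.ne') ht

theorem stmt_1 (N : ℕ) (hN : 3 ≤ N) (p : ℝ) (hp2 : 2 ≤ p) (hpN : p < (N : ℝ))
    (f F Ft : ℝ → ℝ) (hf0 : Continuous f)
    (hF : ∀ t : ℝ, F t = ∫ s in (0:ℝ)..t, f s)
    (hFt : ∀ t : ℝ, Ft t = f t * t - 2 * F t)
    (hf1 : Tendsto (fun t : ℝ => f t / |t| ^ (p + 2 * p / (N : ℝ) - 1)) (nhdsWithin 0 {0}ᶜ) (nhds 0))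
    (hf2 : Tendsto (fun t : ℝ => f t / |t| ^ ((N : ℝ) * p / ((N : ℝ) - p) - 1)) (cocompact ℝ) (nhds 0))
    (hf3 : Tendsto (fun t : ℝ => F t / |t| ^ (p + 2 * p / (N : ℝ))) (cocompact ℝ) atTop)
    (hf4a : StrictAntiOn (fun t : ℝ => Ft t / |t| ^ (p + 2 * p / (N : ℝ))) (Iio 0))
    (hf4b : StrictMonoOn (fun t : ℝ => Ft t / |t| ^ (p + 2 * p / (N : ℝ))) (Ioi 0)) :
    ∀ t : ℝ, t ≠ 0 → 0 < F t :=
  stmt_1_general N hN p hp2 f F Ft hf0 hF hFt hf1 hf4a hf4b
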